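/- Let A and B be n×n positive semidefinite complex matrices such that A − ‖B‖·I is positive semidefinite (where ‖B‖ is the operator norm of B). Let g : [0,∞) → ℝ be non-negative, monotonically increasing and concave. Then for every index k, the k-th largest eigenvalue of g(A) − g(B) is at most the k-th largest eigenvalue of g(A − B); that is, λ_k↓(g(A) − g(B)) ≤ λ_k↓(g(A − B)) for all k. -/

import Mathlib

open Matrix
open scoped ComplexOrder

/-- The eigenvalues of a square matrix, sorted in non-increasing order
(junk value `0` if the matrix is not Hermitian). -/
noncomputable def eigValsDown {𝕜 : Type*} [RCLike 𝕜] {n : ℕ}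
    (A : Matrix (Fin n) (Fin n) 𝕜) : Fin n → ℝ :=
  if hA : A.IsHermitian then
    fun k => (hA.eigenvalues ∘ Tuple.sort hA.eigenvalues) k.rev
  else 0

/-- Functional calculus: apply a real function to a Hermitian matrix via its spectral
decomposition (junk value `0` if the matrix is not Hermitian). -/
noncomputable def matFun {𝕜 : Type*} [RCLike 𝕜] {n : ℕ} (h : ℝ → ℝ)
    (A : Matrix (Fin n) (Fin n) 𝕜) : Matrix (Fin n) (Fin n) 𝕜 :=
  if hA : A.IsHermitian then
    (hA.eigenvectorUnitary : Matrix (Fin n) (Fin n) 𝕜) *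
      Matrix.diagonal (fun i => (h (hA.eigenvalues i) : 𝕜)) *
      star (hA.eigenvectorUnitary : Matrix (Fin n) (Fin n) 𝕜)
  else 0

/-- The operator norm (largest singular value) of a matrix. -/
noncomputable def opNorm {𝕜 : Type*} [RCLike 𝕜] {n : ℕ}
    (A : Matrix (Fin n) (Fin n) 𝕜) : ℝ :=
  ‖Matrix.toEuclideanCLM (𝕜 := 𝕜) A‖

/-- The matrix absolute value `|M| = (Mᴴ M)^(1/2)`. -/
noncomputable def matAbs {𝕜 : Type*} [RCLike 𝕜] {n : ℕ}
    (A : Matrix (Fin n) (Fin n) 𝕜) : Matrix (Fin n) (Fin n) 𝕜 :=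
  ((Matrix.posSemidef_conjTranspose_mul_self A).1.eigenvectorUnitary : Matrix (Fin n) (Fin n) 𝕜) *
    Matrix.diagonal ((↑) ∘ Real.sqrt ∘ (Matrix.posSemidef_conjTranspose_mul_self A).1.eigenvalues) *
    (star (Matrix.posSemidef_conjTranspose_mul_self A).1.eigenvectorUnitary : Matrix (Fin n) (Fin n) 𝕜)

/-- The Ky Fan `k`-norm: the sum of the `k` largest singular values. -/
noncomputable def kyFanNorm {𝕜 : Type*} [RCLike 𝕜] {n : ℕ} (k : ℕ)
    (A : Matrix (Fin n) (Fin n) 𝕜) : ℝ :=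
  ∑ j ∈ Finset.univ.filter (fun j : Fin n => (j : ℕ) < k), eigValsDown (matAbs A) j

/-!
Fix a unit vector `x` and put `a = ⟪x, A x⟫`, `β = ⟪x, B x⟫`, `b = ‖B‖`, so that
`0 ≤ β ≤ b ≤ a`. Jensen's inequality in an eigenbasis of `A` gives `⟪x, g(A) x⟫ ≤ g(a)`.
Concavity and `g 0 ≥ 0` give `g(βᵢ) ≥ g(b) - g(b - βᵢ)` for every eigenvalue `βᵢ` of `B`, and
Jensen's inequality in an eigenbasis of `B` then gives `⟪x, g(B) x⟫ ≥ g(b) - g(b - β)`. Since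
`b - β ≤ b ≤ a` and `(b - β) + a = b + (a - β)`, concavity once more yields
`g(a) - g(b) + g(b - β) ≤ g(a - β)`, so that `⟪x, (g(A) - g(B)) x⟫ ≤ g(⟪x, (A - B) x⟫)`.

By the Courant–Fischer principle on the span of the eigenvectors of `A - B` belonging to its
`n - k` smallest eigenvalues, and monotonicity of `g`, this becomes
`λₖ(g(A) - g(B)) ≤ g(λₖ(A - B)) ≤ λₖ(g(A - B))`.
-/

open Finset
open scoped InnerProductSpace

section Concave

variable {s : Set ℝ} {g : ℝ → ℝ}

theorem ConcaveOn.add_le_add_of_add_eq (hg : ConcaveOn ℝ s g)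
    {x y u v : ℝ} (hx : x ∈ s) (hy : y ∈ s) (hxu : x ≤ u) (huy : u ≤ y) (h : x + y = u + v) :
    g x + g y ≤ g u + g v := by
  rcases (hxu.trans huy).eq_or_lt with rfl | hxy
  · obtain rfl : u = x := le_antisymm huy hxu
    obtain rfl : v = u := by linarith
    rfl
  -- `u` and `v` are the convex combinations of `x` and `y` with swapped weights
  have hd : y - x ≠ 0 := (sub_pos.2 hxy).ne'
  obtain ⟨l, m, hl, hm, hlm, hu, hv⟩ : ∃ l m : ℝ, 0 ≤ l ∧ 0 ≤ m ∧ l + m = 1 ∧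
      l * x + m * y = u ∧ m * x + l * y = v :=
    ⟨(y - u) / (y - x), (u - x) / (y - x), div_nonneg (by linarith) (by linarith),
      div_nonneg (by linarith) (by linarith), by field_simp; ring, by field_simp; ring,
      by field_simp; linear_combination (y - x) * h⟩
  have gu := hg.2 hx hy hl hm hlm
  have gv := hg.2 hx hy hm hl (by linarith)
  simp only [smul_eq_mul, hu, hv] at gu gv
  linear_combination gu + gv - (g x + g y) * hlm

theorem ConcaveOn.sub_map_sub_le_sum_mul {ι : Type*} {t : Finset ι}
    (hg : ConcaveOn ℝ (Set.Ici 0) g) (hg0 : 0 ≤ g 0) {w β : ι → ℝ} {b : ℝ}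
    (hw₀ : ∀ i ∈ t, 0 ≤ w i) (hw₁ : ∑ i ∈ t, w i = 1) (hβ : ∀ i ∈ t, β i ∈ Set.Icc 0 b) :
    g b - g (b - ∑ i ∈ t, w i * β i) ≤ ∑ i ∈ t, w i * g (β i) := by
  have pointwise : ∀ i ∈ t, g b - g (b - β i) ≤ g (β i) := fun i hi => by
    have := hg.add_le_add_of_add_eq (u := β i) (v := b - β i) Set.self_mem_Ici
      ((hβ i hi).1.trans (hβ i hi).2) (hβ i hi).1 (hβ i hi).2 (by ring)
    linarith
  have jensen : ∑ i ∈ t, w i * g (b - β i) ≤ g (b - ∑ i ∈ t, w i * β i) := by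
    have := hg.le_map_sum hw₀ hw₁ (p := fun i => b - β i)
      fun i hi => sub_nonneg.2 (hβ i hi).2
    simpa only [smul_eq_mul, mul_sub, sum_sub_distrib, ← sum_mul, hw₁, one_mul] using this
  calc g b - g (b - ∑ i ∈ t, w i * β i) ≤ ∑ i ∈ t, w i * (g b - g (b - β i)) := by
        simp only [mul_sub, sum_sub_distrib, ← sum_mul, hw₁, one_mul]
        linarith
    _ ≤ ∑ i ∈ t, w i * g (β i) :=
        sum_le_sum fun i hi => mul_le_mul_of_nonneg_left (pointwise i hi) (hw₀ i hi)

end Concave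

section OrthonormalBasis

variable {𝕜 E ι : Type*} [RCLike 𝕜] [NormedAddCommGroup E] [InnerProductSpace 𝕜 E] [Fintype ι]

theorem OrthonormalBasis.inner_eq_zero_of_mem_span_image (v : OrthonormalBasis ι 𝕜 E)
    {s : Set ι} {x : E} (hx : x ∈ Submodule.span 𝕜 (v '' s)) {j : ι} (hj : j ∉ s) :
    ⟪v j, x⟫_𝕜 = 0 := by
  induction hx using Submodule.span_induction with
  | mem y hy =>
    obtain ⟨i, hi, rfl⟩ := hy
    exact v.orthonormal.2 (ne_of_mem_of_not_mem hi hj).symm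
  | zero => exact inner_zero_right _
  | add y z _ _ hy hz => rw [inner_add_right, hy, hz, add_zero]
  | smul a y _ hy => rw [inner_smul_right, hy, mul_zero]

theorem OrthonormalBasis.finrank_span_image (v : OrthonormalBasis ι 𝕜 E) (s : Finset ι) :
    Module.finrank 𝕜 (Submodule.span 𝕜 (v '' s)) = s.card := by
  rw [Set.image_eq_range]
  exact (finrank_span_eq_card (v.orthonormal.linearIndependent.comp _ Subtype.val_injective)).trans
    (Fintype.card_coe s)

end OrthonormalBasis

theorem Submodule.exists_mem_mem_norm_eq_one_of_finrank_lt_add {𝕜 E : Type*} [RCLike 𝕜]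
    [NormedAddCommGroup E] [NormedSpace 𝕜 E] [FiniteDimensional 𝕜 E] {S T : Submodule 𝕜 E}
    (h : Module.finrank 𝕜 E < Module.finrank 𝕜 S + Module.finrank 𝕜 T) :
    ∃ x ∈ S, x ∈ T ∧ ‖x‖ = 1 := by
  have hST : S ⊓ T ≠ ⊥ := by
    intro hbot
    have := Submodule.finrank_sup_add_finrank_inf_eq S T
    rw [hbot, finrank_bot] at this
    have := Submodule.finrank_le (S ⊔ T)
    omega
  obtain ⟨y, hy, hy0⟩ := Submodule.exists_mem_ne_zero_of_ne_bot hST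
  refine ⟨((‖y‖⁻¹ : ℝ) : 𝕜) • y, S.smul_mem _ hy.1, T.smul_mem _ hy.2, ?_⟩
  rw [norm_smul, RCLike.norm_ofReal, abs_inv, abs_norm, inv_mul_cancel₀ (norm_ne_zero_iff.2 hy0)]

namespace Matrix

variable {𝕜 : Type*} [RCLike 𝕜] {ι : Type*} [Fintype ι]

def reQuadForm (M : Matrix ι ι 𝕜) (x : EuclideanSpace 𝕜 ι) : ℝ :=
  RCLike.re (star ⇑x ⬝ᵥ (M *ᵥ ⇑x))

theorem reQuadForm_sub (M N : Matrix ι ι 𝕜) (x : EuclideanSpace 𝕜 ι) :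
    reQuadForm (M - N) x = reQuadForm M x - reQuadForm N x := by
  simp only [reQuadForm, sub_mulVec, dotProduct_sub, map_sub]

theorem reQuadForm_smul_one [DecidableEq ι] (r : ℝ) (x : EuclideanSpace 𝕜 ι) :
    reQuadForm (r • (1 : Matrix ι ι 𝕜)) x = r * ‖x‖ ^ 2 := by
  rw [reQuadForm, smul_mulVec, one_mulVec, dotProduct_smul, dotProduct_comm,
    ← EuclideanSpace.inner_eq_star_dotProduct, inner_self_eq_norm_sq_to_K, RCLike.smul_re]
  norm_cast

theorem PosSemidef.reQuadForm_nonneg {M : Matrix ι ι 𝕜} (hM : M.PosSemidef)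
    (x : EuclideanSpace 𝕜 ι) : 0 ≤ reQuadForm M x :=
  (RCLike.nonneg_iff.1 (hM.dotProduct_mulVec_nonneg _)).1

theorem IsHermitian.eigenvalues_eq_reQuadForm [DecidableEq ι] {M : Matrix ι ι 𝕜}
    (hM : M.IsHermitian) (i : ι) : hM.eigenvalues i = reQuadForm M (hM.eigenvectorBasis i) :=
  hM.eigenvalues_eq i

theorem reQuadForm_eq_sum_of_mulVec_eq {M : Matrix ι ι 𝕜}
    {v : OrthonormalBasis ι 𝕜 (EuclideanSpace 𝕜 ι)} {c : ι → ℝ}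
    (hv : ∀ j, M *ᵥ ⇑(v j) = c j • ⇑(v j)) (x : EuclideanSpace 𝕜 ι) :
    reQuadForm M x = ∑ j, c j * ‖⟪v j, x⟫_𝕜‖ ^ 2 := by
  have hx : (⇑x : ι → 𝕜) = ∑ j, ⟪v j, x⟫_𝕜 • ⇑(v j) := by
    simpa using congrArg WithLp.ofLp (v.sum_repr' x).symm
  have hdot : ∀ j, star ⇑x ⬝ᵥ ⇑(v j) = ⟪x, v j⟫_𝕜 := fun j => by
    rw [dotProduct_comm, EuclideanSpace.inner_eq_star_dotProduct]
  have hMx : M *ᵥ ⇑x = ∑ j, (⟪v j, x⟫_𝕜 * c j) • ⇑(v j) := by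
    rw [hx, mulVec_sum]
    refine sum_congr rfl fun j _ => ?_
    rw [mulVec_smul, hv, RCLike.real_smul_eq_coe_smul (K := 𝕜), smul_smul]
  rw [reQuadForm, hMx, dotProduct_sum, map_sum]
  refine sum_congr rfl fun j _ => ?_
  rw [dotProduct_smul, hdot, smul_eq_mul, ← inner_conj_symm, mul_comm, ← mul_assoc,
    RCLike.mul_conj, RCLike.norm_conj, ← RCLike.ofReal_pow, ← RCLike.ofReal_mul, RCLike.ofReal_re,
    mul_comm]

section Eigenbasis

variable {M : Matrix ι ι 𝕜} {v : OrthonormalBasis ι 𝕜 (EuclideanSpace 𝕜 ι)} {c : ι → ℝ}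
  {s : Finset ι} {t : ℝ} {x : EuclideanSpace 𝕜 ι}

theorem reQuadForm_le_of_mem_span (hv : ∀ j, M *ᵥ ⇑(v j) = c j • ⇑(v j))
    (hc : ∀ j ∈ s, c j ≤ t) (hx : x ∈ Submodule.span 𝕜 (v '' s)) :
    reQuadForm M x ≤ t * ‖x‖ ^ 2 := by
  rw [reQuadForm_eq_sum_of_mulVec_eq hv, ← v.sum_sq_norm_inner_right, mul_sum]
  refine sum_le_sum fun j _ => ?_
  by_cases hj : j ∈ s
  · exact mul_le_mul_of_nonneg_right (hc j hj) (by positivity)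
  · simp [v.inner_eq_zero_of_mem_span_image hx (mod_cast hj)]

theorem le_reQuadForm_of_mem_span (hv : ∀ j, M *ᵥ ⇑(v j) = c j • ⇑(v j))
    (hc : ∀ j ∈ s, t ≤ c j) (hx : x ∈ Submodule.span 𝕜 (v '' s)) :
    t * ‖x‖ ^ 2 ≤ reQuadForm M x := by
  rw [reQuadForm_eq_sum_of_mulVec_eq hv, ← v.sum_sq_norm_inner_right, mul_sum]
  refine sum_le_sum fun j _ => ?_
  by_cases hj : j ∈ s
  · exact mul_le_mul_of_nonneg_right (hc j hj) (by positivity)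
  · simp [v.inner_eq_zero_of_mem_span_image hx (mod_cast hj)]

end Eigenbasis

end Matrix

section SortedEigenvalues

variable {𝕜 : Type*} [RCLike 𝕜] {n : ℕ} {M : Matrix (Fin n) (Fin n) 𝕜}

theorem eigValsDown_eq_eigenvalues_sort (hM : M.IsHermitian) (k : Fin n) :
    eigValsDown M k = hM.eigenvalues (Tuple.sort hM.eigenvalues k.rev) := by
  rw [eigValsDown, dif_pos hM]
  rfl

theorem exists_card_eq_forall_eigenvalues_le_eigValsDown (hM : M.IsHermitian) (k : Fin n) :
    ∃ s : Finset (Fin n), s.card = n - k ∧ ∀ j ∈ s, hM.eigenvalues j ≤ eigValsDown M k := by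
  refine ⟨(Finset.Iic k.rev).image (Tuple.sort hM.eigenvalues), ?_, fun j hj => ?_⟩
  · rw [Finset.card_image_of_injective _ (Equiv.injective _), Fin.card_Iic, Fin.val_rev]
    omega
  · obtain ⟨i, hi, rfl⟩ := Finset.mem_image.1 hj
    rw [eigValsDown_eq_eigenvalues_sort hM]
    exact Tuple.monotone_sort hM.eigenvalues (Finset.mem_Iic.1 hi)

theorem exists_card_eq_forall_eigValsDown_le_eigenvalues (hM : M.IsHermitian) (k : Fin n) :
    ∃ s : Finset (Fin n), s.card = k + 1 ∧ ∀ j ∈ s, eigValsDown M k ≤ hM.eigenvalues j := by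
  refine ⟨(Finset.Ici k.rev).image (Tuple.sort hM.eigenvalues), ?_, fun j hj => ?_⟩
  · rw [Finset.card_image_of_injective _ (Equiv.injective _), Fin.card_Ici, Fin.val_rev]
    omega
  · obtain ⟨i, hi, rfl⟩ := Finset.mem_image.1 hj
    rw [eigValsDown_eq_eigenvalues_sort hM]
    exact Tuple.monotone_sort hM.eigenvalues (Finset.mem_Ici.1 hi)

end SortedEigenvalues

section CourantFischer

variable {𝕜 : Type*} [RCLike 𝕜] {n : ℕ} {X : Matrix (Fin n) (Fin n) 𝕜}

theorem eigValsDown_le_of_forall_reQuadForm_le (hX : X.IsHermitian) {k : Fin n} {t : ℝ}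
    (S : Submodule 𝕜 (EuclideanSpace 𝕜 (Fin n))) (hS : n ≤ Module.finrank 𝕜 S + k)
    (h : ∀ x ∈ S, ‖x‖ = 1 → reQuadForm X x ≤ t) : eigValsDown X k ≤ t := by
  obtain ⟨s, hs, hle⟩ := exists_card_eq_forall_eigValsDown_le_eigenvalues hX k
  obtain ⟨x, hxS, hxs, hx⟩ := Submodule.exists_mem_mem_norm_eq_one_of_finrank_lt_add
    (S := S) (T := Submodule.span 𝕜 (hX.eigenvectorBasis '' s))
    (by rw [finrank_euclideanSpace_fin, OrthonormalBasis.finrank_span_image, hs]; omega)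
  have := le_reQuadForm_of_mem_span hX.mulVec_eigenvectorBasis hle hxs
  rw [hx, one_pow, mul_one] at this
  exact this.trans (h x hxS hx)

theorem le_eigValsDown_of_forall_le_reQuadForm (hX : X.IsHermitian) {k : Fin n} {t : ℝ}
    (S : Submodule 𝕜 (EuclideanSpace 𝕜 (Fin n))) (hS : k < Module.finrank 𝕜 S)
    (h : ∀ x ∈ S, ‖x‖ = 1 → t ≤ reQuadForm X x) : t ≤ eigValsDown X k := by
  obtain ⟨s, hs, hle⟩ := exists_card_eq_forall_eigenvalues_le_eigValsDown hX k
  obtain ⟨x, hxS, hxs, hx⟩ := Submodule.exists_mem_mem_norm_eq_one_of_finrank_lt_add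
    (S := S) (T := Submodule.span 𝕜 (hX.eigenvectorBasis '' s))
    (by rw [finrank_euclideanSpace_fin, OrthonormalBasis.finrank_span_image, hs]; omega)
  have := reQuadForm_le_of_mem_span hX.mulVec_eigenvectorBasis hle hxs
  rw [hx, one_pow, mul_one] at this
  exact (h x hxS hx).trans this

end CourantFischer

section FunctionalCalculus

variable {𝕜 : Type*} [RCLike 𝕜] {n : ℕ} {M : Matrix (Fin n) (Fin n) 𝕜}

theorem Matrix.IsHermitian.matFun (hM : M.IsHermitian) (g : ℝ → ℝ) :
    (matFun g M).IsHermitian := by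
  rw [_root_.matFun, dif_pos hM]
  exact isHermitian_mul_mul_conjTranspose _
    (isHermitian_diagonal_iff.2 fun _ => RCLike.im_eq_zero_iff_isSelfAdjoint.1 (RCLike.ofReal_im _))

theorem matFun_mulVec_eigenvectorBasis (hM : M.IsHermitian) (g : ℝ → ℝ) (j : Fin n) :
    matFun g M *ᵥ ⇑(hM.eigenvectorBasis j) = g (hM.eigenvalues j) • ⇑(hM.eigenvectorBasis j) := by
  rw [matFun, dif_pos hM, ← mulVec_mulVec, ← mulVec_mulVec, hM.star_eigenvectorUnitary_mulVec,
    diagonal_mulVec_single, mul_one, mulVec_single, op_smul_eq_smul,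
    IsHermitian.eigenvectorUnitary_col_eq, RCLike.real_smul_eq_coe_smul (K := 𝕜)]

theorem reQuadForm_matFun (hM : M.IsHermitian) (g : ℝ → ℝ) (x : EuclideanSpace 𝕜 (Fin n)) :
    reQuadForm (matFun g M) x =
      ∑ j, g (hM.eigenvalues j) * ‖⟪hM.eigenvectorBasis j, x⟫_𝕜‖ ^ 2 :=
  reQuadForm_eq_sum_of_mulVec_eq (matFun_mulVec_eigenvectorBasis hM g) x

theorem ConcaveOn.reQuadForm_matFun_le {s : Set ℝ} {g : ℝ → ℝ} (hg : ConcaveOn ℝ s g)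
    (hM : M.IsHermitian) (hs : ∀ i, hM.eigenvalues i ∈ s) {x : EuclideanSpace 𝕜 (Fin n)}
    (hx : ‖x‖ = 1) : reQuadForm (matFun g M) x ≤ g (reQuadForm M x) := by
  have hw := hM.eigenvectorBasis.sum_sq_norm_inner_right x
  rw [hx, one_pow] at hw
  have := hg.le_map_sum (fun _ _ => by positivity) hw fun i _ => hs i
  simpa only [reQuadForm_matFun hM, reQuadForm_eq_sum_of_mulVec_eq hM.mulVec_eigenvectorBasis,
    smul_eq_mul, mul_comm] using this

end FunctionalCalculus

section QuadraticFormBounds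

variable {𝕜 : Type*} [RCLike 𝕜] {n : ℕ} {x : EuclideanSpace 𝕜 (Fin n)}

theorem reQuadForm_le_opNorm (M : Matrix (Fin n) (Fin n) 𝕜) (hx : ‖x‖ = 1) :
    reQuadForm M x ≤ opNorm M := by
  have hM : reQuadForm M x = RCLike.re ⟪x, toEuclideanCLM (𝕜 := 𝕜) M x⟫_𝕜 := by
    rw [reQuadForm, dotProduct_comm]
    rfl
  calc reQuadForm M x ≤ ‖⟪x, toEuclideanCLM (𝕜 := 𝕜) M x⟫_𝕜‖ := hM ▸ RCLike.re_le_norm _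
    _ ≤ ‖x‖ * ‖toEuclideanCLM (𝕜 := 𝕜) M x‖ := norm_inner_le_norm _ _
    _ ≤ opNorm M := by simpa [hx, opNorm] using (toEuclideanCLM (𝕜 := 𝕜) M).le_opNorm x

theorem Matrix.IsHermitian.of_sub_smul_one {M : Matrix (Fin n) (Fin n) 𝕜} {r : ℝ}
    (h : (M - r • (1 : Matrix (Fin n) (Fin n) 𝕜)).IsHermitian) : M.IsHermitian := by
  simpa using h.add (isHermitian_one.smul (IsSelfAdjoint.all r))

theorem le_reQuadForm_of_posSemidef_sub_smul_one {M : Matrix (Fin n) (Fin n) 𝕜} {r : ℝ}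
    (h : (M - r • (1 : Matrix (Fin n) (Fin n) 𝕜)).PosSemidef) (hx : ‖x‖ = 1) :
    r ≤ reQuadForm M x := by
  have := h.reQuadForm_nonneg x
  rw [reQuadForm_sub, reQuadForm_smul_one, hx, one_pow, mul_one] at this
  linarith

theorem Matrix.PosSemidef.eigenvalues_mem_Icc_opNorm {M : Matrix (Fin n) (Fin n) 𝕜}
    (hM : M.PosSemidef) (i : Fin n) : hM.1.eigenvalues i ∈ Set.Icc 0 (opNorm M) := by
  rw [hM.1.eigenvalues_eq_reQuadForm]
  exact ⟨hM.reQuadForm_nonneg _, reQuadForm_le_opNorm M (hM.1.eigenvectorBasis.orthonormal.1 i)⟩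

end QuadraticFormBounds

section QuadraticFormInequality

variable {𝕜 : Type*} [RCLike 𝕜] {n : ℕ} {g : ℝ → ℝ} {x : EuclideanSpace 𝕜 (Fin n)}

theorem ConcaveOn.sub_map_sub_le_reQuadForm_matFun (hg : ConcaveOn ℝ (Set.Ici 0) g)
    (hg0 : 0 ≤ g 0) {B : Matrix (Fin n) (Fin n) 𝕜} (hB : B.PosSemidef) (hx : ‖x‖ = 1) :
    g (opNorm B) - g (opNorm B - reQuadForm B x) ≤ reQuadForm (matFun g B) x := by
  have hw := hB.1.eigenvectorBasis.sum_sq_norm_inner_right x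
  rw [hx, one_pow] at hw
  have := hg.sub_map_sub_le_sum_mul hg0 (fun _ _ => by positivity) hw
    fun i _ => hB.eigenvalues_mem_Icc_opNorm i
  simpa only [reQuadForm_matFun hB.1, reQuadForm_eq_sum_of_mulVec_eq hB.1.mulVec_eigenvectorBasis,
    mul_comm] using this

theorem reQuadForm_matFun_sub_matFun_le {A B : Matrix (Fin n) (Fin n) 𝕜}
    (hAB : (A - opNorm B • (1 : Matrix (Fin n) (Fin n) 𝕜)).PosSemidef) (hB : B.PosSemidef)
    (hg0 : 0 ≤ g 0) (hg : ConcaveOn ℝ (Set.Ici 0) g) (hx : ‖x‖ = 1) :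
    reQuadForm (matFun g A - matFun g B) x ≤ g (reQuadForm (A - B) x) := by
  have hA : A.IsHermitian := .of_sub_smul_one hAB.1
  set b := opNorm B
  have hA_spec : ∀ i, hA.eigenvalues i ∈ Set.Ici 0 := fun i =>
    (norm_nonneg _).trans <| hA.eigenvalues_eq_reQuadForm i ▸
      le_reQuadForm_of_posSemidef_sub_smul_one hAB (hA.eigenvectorBasis.orthonormal.1 i)
  have hAx : b ≤ reQuadForm A x := le_reQuadForm_of_posSemidef_sub_smul_one hAB hx
  have hBx : reQuadForm B x ∈ Set.Icc 0 b := ⟨hB.reQuadForm_nonneg x, reQuadForm_le_opNorm B hx⟩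
  have jensenA := hg.reQuadForm_matFun_le hA hA_spec hx
  have jensenB := hg.sub_map_sub_le_reQuadForm_matFun hg0 hB hx
  have concavity := hg.add_le_add_of_add_eq (u := b) (v := reQuadForm A x - reQuadForm B x)
    (sub_nonneg.2 hBx.2) (hBx.1.trans (hBx.2.trans hAx)) (sub_le_self _ hBx.1) hAx (by ring)
  rw [reQuadForm_sub, reQuadForm_sub]
  linarith

end QuadraticFormInequality

section EigenvalueComparison

variable {𝕜 : Type*} [RCLike 𝕜] {n : ℕ} {s : Set ℝ} {g : ℝ → ℝ}

theorem MonotoneOn.eigValsDown_le_of_reQuadForm_le (hg : MonotoneOn g s)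
    {X C : Matrix (Fin n) (Fin n) 𝕜} (hX : X.IsHermitian) (hC : C.IsHermitian)
    (hCs : ∀ x : EuclideanSpace 𝕜 (Fin n), ‖x‖ = 1 → reQuadForm C x ∈ s)
    (h : ∀ x : EuclideanSpace 𝕜 (Fin n), ‖x‖ = 1 → reQuadForm X x ≤ g (reQuadForm C x))
    (k : Fin n) : eigValsDown X k ≤ g (eigValsDown C k) := by
  obtain ⟨t, ht, hle⟩ := exists_card_eq_forall_eigenvalues_le_eigValsDown hC k
  have hCk : eigValsDown C k ∈ s := by
    rw [eigValsDown_eq_eigenvalues_sort hC, hC.eigenvalues_eq_reQuadForm]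
    exact hCs _ (hC.eigenvectorBasis.orthonormal.1 _)
  refine eigValsDown_le_of_forall_reQuadForm_le hX (Submodule.span 𝕜 (hC.eigenvectorBasis '' t))
    (by rw [OrthonormalBasis.finrank_span_image, ht]; omega) fun x hxt hx => ?_
  have hCx := reQuadForm_le_of_mem_span hC.mulVec_eigenvectorBasis hle hxt
  rw [hx, one_pow, mul_one] at hCx
  exact (h x hx).trans (hg (hCs x hx) hCk hCx)

theorem MonotoneOn.le_eigValsDown_matFun (hg : MonotoneOn g s) {M : Matrix (Fin n) (Fin n) 𝕜}
    (hM : M.IsHermitian) (hs : ∀ i, hM.eigenvalues i ∈ s) (k : Fin n) :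
    g (eigValsDown M k) ≤ eigValsDown (matFun g M) k := by
  obtain ⟨t, ht, hle⟩ := exists_card_eq_forall_eigValsDown_le_eigenvalues hM k
  refine le_eigValsDown_of_forall_le_reQuadForm (hM.matFun g)
    (Submodule.span 𝕜 (hM.eigenvectorBasis '' t))
    (by rw [OrthonormalBasis.finrank_span_image, ht]; omega) fun x hxt hx => ?_
  have := le_reQuadForm_of_mem_span (matFun_mulVec_eigenvectorBasis hM g)
    (fun j hj => hg (eigValsDown_eq_eigenvalues_sort hM k ▸ hs _) (hs j) (hle j hj)) hxt
  rwa [hx, one_pow, mul_one] at this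

end EigenvalueComparison

theorem stmt0_general {n : ℕ} (A B : Matrix (Fin n) (Fin n) ℂ)
    (hB : B.PosSemidef)
    (hAB : (A - opNorm B • (1 : Matrix (Fin n) (Fin n) ℂ)).PosSemidef)
    (g : ℝ → ℝ) (hg_nonneg : ∀ x ∈ Set.Ici (0 : ℝ), 0 ≤ g x)
    (hg_mono : MonotoneOn g (Set.Ici (0 : ℝ)))
    (hg_conc : ConcaveOn ℝ (Set.Ici (0 : ℝ)) g)
    (k : Fin n) :
    eigValsDown (matFun g A - matFun g B) k ≤ eigValsDown (matFun g (A - B)) k := by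
  have hA : A.IsHermitian := .of_sub_smul_one hAB.1
  have hC : (A - B).IsHermitian := hA.sub hB.1
  have hC_nonneg (x : EuclideanSpace ℂ (Fin n)) (hx : ‖x‖ = 1) :
      reQuadForm (A - B) x ∈ Set.Ici 0 := by
    rw [Set.mem_Ici, reQuadForm_sub, sub_nonneg]
    exact (reQuadForm_le_opNorm B hx).trans (le_reQuadForm_of_posSemidef_sub_smul_one hAB hx)
  have key (x : EuclideanSpace ℂ (Fin n)) (hx : ‖x‖ = 1) :=
    reQuadForm_matFun_sub_matFun_le hAB hB (hg_nonneg 0 Set.self_mem_Ici) hg_conc hx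
  calc eigValsDown (matFun g A - matFun g B) k ≤ g (eigValsDown (A - B) k) :=
        hg_mono.eigValsDown_le_of_reQuadForm_le ((hA.matFun g).sub (hB.1.matFun g)) hC
          hC_nonneg key k
    _ ≤ eigValsDown (matFun g (A - B)) k :=
        hg_mono.le_eigValsDown_matFun hC (fun i => hC.eigenvalues_eq_reQuadForm i ▸
          hC_nonneg _ (hC.eigenvectorBasis.orthonormal.1 i)) k

/-- Proposition `prop:ggc`: for PSD `A, B` with `A ≥ ‖B‖·I` and a
non-negative, monotonically increasing, concave `g` on `[0,∞)`, each sorted eigenvalue of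
`g(A) - g(B)` is at most the corresponding sorted eigenvalue of `g(A - B)`. -/
theorem stmt0 {n : ℕ} (A B : Matrix (Fin n) (Fin n) ℂ)
    (hA : A.PosSemidef) (hB : B.PosSemidef)
    (hAB : (A - opNorm B • (1 : Matrix (Fin n) (Fin n) ℂ)).PosSemidef)
    (g : ℝ → ℝ) (hg_nonneg : ∀ x ∈ Set.Ici (0 : ℝ), 0 ≤ g x)
    (hg_mono : MonotoneOn g (Set.Ici (0 : ℝ)))
    (hg_conc : ConcaveOn ℝ (Set.Ici (0 : ℝ)) g)
    (k : Fin n) :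
    eigValsDown (matFun g A - matFun g B) k ≤ eigValsDown (matFun g (A - B)) k :=
  stmt0_general A B hB hAB g hg_nonneg hg_mono hg_conc k
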